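/- Let A, B be complex n×n positive semidefinite matrices with b a hermitian square root of B. For complex numbers c₁, c₂, c₃ let C = c₁·bAAB + c₂·bABA + c₃·bBAA. Then Tr(CC†) = |c₁|²T₄ + c₁c₂*T₅ + c₁c₃*T₄ + c₂c₁*T₅ + |c₂|²T₅ + c₂c₃*T₃ + c₃c₁*T₄ + c₃c₂*T₂ + |c₃|²T₁, where T₁=Tr(A⁴B³), T₂=Tr(A³BAB²), T₃=Tr(A³B²AB), T₄=Tr(A²BA²B²), T₅=Tr(A²BABAB), and this quantity is a nonnegative real number. -/

import Mathlib

open Matrix ComplexOrder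

lemma my_trace_nonneg {n : ℕ} {M : Matrix (Fin n) (Fin n) ℂ} (h : M.PosSemidef) :
    0 ≤ M.trace := by
  rw [Matrix.trace]
  apply Finset.sum_nonneg
  intro i _
  have := h.dotProduct_mulVec_nonneg (Pi.single i 1)
  simpa [dotProduct, Matrix.mulVec, Pi.single_apply, Matrix.diag] using this

theorem trace_CCstar_expansion {n : ℕ} (A B b : Matrix (Fin n) (Fin n) ℂ)
    (hA : A.PosSemidef) (hB : B.PosSemidef)
    (hb : b.IsHermitian) (hb2 : b * b = B) (c₁ c₂ c₃ : ℂ)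
    (C : Matrix (Fin n) (Fin n) ℂ)
    (hC : C = c₁ • (b * A * A * B) + c₂ • (b * A * B * A) + c₃ • (b * B * A * A)) :
    (C * Cᴴ).trace =
        c₁ * star c₁ * (A * A * B * A * A * B * B).trace
        + c₁ * star c₂ * (A * A * B * A * B * A * B).trace
        + c₁ * star c₃ * (A * A * B * A * A * B * B).trace
        + c₂ * star c₁ * (A * A * B * A * B * A * B).trace
        + c₂ * star c₂ * (A * A * B * A * B * A * B).trace
        + c₂ * star c₃ * (A * A * A * B * B * A * B).trace
        + c₃ * star c₁ * (A * A * B * A * A * B * B).trace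
        + c₃ * star c₂ * (A * A * A * B * A * B * B).trace
        + c₃ * star c₃ * (A * A * A * A * B * B * B).trace ∧
    0 ≤ (C * Cᴴ).trace := by
  have hAe : Aᴴ = A := hA.1
  have hBe : Bᴴ = B := hB.1
  have hbe : bᴴ = b := hb
  -- cyclic trace for b ⬝ M ⬝ b
  have key : ∀ M : Matrix (Fin n) (Fin n) ℂ, (b * M * b).trace = (M * B).trace := by
    intro M
    rw [Matrix.trace_mul_comm, ← Matrix.mul_assoc, hb2, Matrix.trace_mul_comm]
  constructor
  · subst hC
    simp only [conjTranspose_add, conjTranspose_smul, conjTranspose_mul, hAe, hBe, hbe,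
      Matrix.add_mul, Matrix.mul_add, Matrix.smul_mul, Matrix.mul_smul, trace_add, trace_smul,
      smul_smul, smul_eq_mul]
    have t11 : (b * A * A * B * (B * A * A * b)).trace = (A * A * B * A * A * B * B).trace := by
      have : b * A * A * B * (B * A * A * b) = b * (A * A * B * B * A * A) * b := by
        simp only [Matrix.mul_assoc]
      rw [this, key]
      rw [show A * A * B * B * A * A * B = (A * A * B * B) * (A * A * B) by
        simp only [Matrix.mul_assoc], Matrix.trace_mul_comm]
      all_goals simp only [Matrix.mul_assoc]
    have t12 : (b * A * A * B * (A * B * A * b)).trace = (A * A * B * A * B * A * B).trace := by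
      have : b * A * A * B * (A * B * A * b) = b * (A * A * B * A * B * A) * b := by
        simp only [Matrix.mul_assoc]
      rw [this, key]
    have t13 : (b * A * A * B * (A * A * B * b)).trace = (A * A * B * A * A * B * B).trace := by
      have : b * A * A * B * (A * A * B * b) = b * (A * A * B * A * A * B) * b := by
        simp only [Matrix.mul_assoc]
      rw [this, key]
    have t21 : (b * A * B * A * (B * A * A * b)).trace = (A * A * B * A * B * A * B).trace := by
      have : b * A * B * A * (B * A * A * b) = b * (A * B * A * B * A * A) * b := by
        simp only [Matrix.mul_assoc]
      rw [this, key]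
      rw [show A * B * A * B * A * A * B = (A * B * A * B) * (A * A * B) by
        simp only [Matrix.mul_assoc], Matrix.trace_mul_comm]
      all_goals simp only [Matrix.mul_assoc]
    have t22 : (b * A * B * A * (A * B * A * b)).trace = (A * A * B * A * B * A * B).trace := by
      have : b * A * B * A * (A * B * A * b) = b * (A * B * A * A * B * A) * b := by
        simp only [Matrix.mul_assoc]
      rw [this, key]
      rw [show A * B * A * A * B * A * B = (A * B) * (A * A * B * A * B) by
        simp only [Matrix.mul_assoc], Matrix.trace_mul_comm]
      all_goals simp only [Matrix.mul_assoc]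
    have t23 : (b * A * B * A * (A * A * B * b)).trace = (A * A * A * B * B * A * B).trace := by
      have : b * A * B * A * (A * A * B * b) = b * (A * B * A * A * A * B) * b := by
        simp only [Matrix.mul_assoc]
      rw [this, key]
      rw [show A * B * A * A * A * B * B = (A * B) * (A * A * A * B * B) by
        simp only [Matrix.mul_assoc], Matrix.trace_mul_comm]
      all_goals simp only [Matrix.mul_assoc]
    have t31 : (b * B * A * A * (B * A * A * b)).trace = (A * A * B * A * A * B * B).trace := by
      have : b * B * A * A * (B * A * A * b) = b * (B * A * A * B * A * A) * b := by
        simp only [Matrix.mul_assoc]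
      rw [this, key]
      rw [show B * A * A * B * A * A * B = B * (A * A * B * A * A * B) by
        simp only [Matrix.mul_assoc], Matrix.trace_mul_comm]
      all_goals simp only [Matrix.mul_assoc]
    have t32 : (b * B * A * A * (A * B * A * b)).trace = (A * A * A * B * A * B * B).trace := by
      have : b * B * A * A * (A * B * A * b) = b * (B * A * A * A * B * A) * b := by
        simp only [Matrix.mul_assoc]
      rw [this, key]
      rw [show B * A * A * A * B * A * B = B * (A * A * A * B * A * B) by
        simp only [Matrix.mul_assoc], Matrix.trace_mul_comm]
      all_goals simp only [Matrix.mul_assoc]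
    have t33 : (b * B * A * A * (A * A * B * b)).trace = (A * A * A * A * B * B * B).trace := by
      have : b * B * A * A * (A * A * B * b) = b * (B * A * A * A * A * B) * b := by
        simp only [Matrix.mul_assoc]
      rw [this, key]
      rw [show B * A * A * A * A * B * B = B * (A * A * A * A * B * B) by
        simp only [Matrix.mul_assoc], Matrix.trace_mul_comm]
      all_goals simp only [Matrix.mul_assoc]
    simp only [Matrix.mul_assoc] at t11 t12 t13 t21 t22 t23 t31 t32 t33 ⊢
    rw [t11, t12, t13, t21, t22, t23, t31, t32, t33]
    ring
  · exact my_trace_nonneg (Matrix.posSemidef_self_mul_conjTranspose C)
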